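/- arXiv:2511.19723 — 2 statements merged into one kernel-verified Lean document; each statement's English description precedes it below -/
import Mathlib

section
/- If f : ℝ^n → ℝ is convex, differentiable, and its gradient is L-Lipschitz, then for any points x, y, z we have ⟨∇f(x) − ∇f(y), z − y⟩ ≥ −(L/2)‖z − x‖². -/
/-!
Two consequences of convexity, `f y + ⟪∇f(y), z - y⟫ ≤ f z` and `f x + ⟪∇f(x), y - x⟫ ≤ f y`,
together with the descent lemma `f z ≤ f x + ⟪∇f(x), z - x⟫ + (L/2)‖z - x‖²`, add up to the claim.
The descent lemma holds because `t ↦ f (x + t (z - x)) - t ⟪∇f(x), z - x⟫ - (L/2) t² ‖z - x‖²`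
has derivative `⟪∇f(x + t (z - x)) - ∇f(x), z - x⟫ - L t ‖z - x‖² ≤ 0` for `t ≥ 0`.
-/

open RealInnerProductSpace Set

section

variable {E : Type*} [NormedAddCommGroup E] [InnerProductSpace ℝ E] [CompleteSpace E]
  {f : E → ℝ} {f' : E}

theorem HasGradientAt.hasDerivAt_comp_add_smul {a v : E} {t : ℝ}
    (hf : HasGradientAt f f' (a + t • v)) :
    HasDerivAt (fun s : ℝ => f (a + s • v)) ⟪f', v⟫ t := by
  have hline : HasDerivAt (fun s : ℝ => a + s • v) v t := by
    simpa using ((hasDerivAt_id t).smul_const v).const_add a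
  simpa [Function.comp_def] using hf.hasFDerivAt.comp_hasDerivAt t hline

theorem ConvexOn.add_inner_le_of_hasGradientAt {s : Set E} {a b : E} (hconv : ConvexOn ℝ s f)
    (ha : a ∈ s) (hb : b ∈ s) (hf : HasGradientAt f f' a) :
    f a + ⟪f', b - a⟫ ≤ f b := by
  have hline : ConvexOn ℝ (AffineMap.lineMap a b ⁻¹' s) (fun t : ℝ => f (a + t • (b - a))) := by
    simpa [Function.comp_def, AffineMap.lineMap_apply_module', add_comm]
      using hconv.comp_affineMap (AffineMap.lineMap a b)
  have hderiv : HasDerivAt (fun t : ℝ => f (a + t • (b - a))) ⟪f', b - a⟫ 0 :=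
    HasGradientAt.hasDerivAt_comp_add_smul (by simpa using hf)
  have hslope := hline.le_slope_of_hasDerivAt (by simpa using ha) (by simpa using hb) zero_lt_one
    hderiv
  simp only [slope_def_field, one_smul, add_sub_cancel, zero_smul, add_zero, sub_zero, div_one]
    at hslope
  linarith

theorem le_add_inner_add_sq_of_hasGradientAt {g : E → E} {L : ℝ}
    (hgrad : ∀ x, HasGradientAt f (g x) x) {a : E} (hlip : ∀ x, ‖g x - g a‖ ≤ L * ‖x - a‖)
    (b : E) : f b ≤ f a + ⟪g a, b - a⟫ + L / 2 * ‖b - a‖ ^ 2 := by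
  set v := b - a
  set φ : ℝ → ℝ := fun t => f (a + t • v) - ⟪g a, v⟫ * t - L / 2 * ‖v‖ ^ 2 * t ^ 2
  have hφ : ∀ t, HasDerivAt φ (⟪g (a + t • v) - g a, v⟫ - L * ‖v‖ ^ 2 * t) t := by
    intro t
    have := (((hgrad (a + t • v)).hasDerivAt_comp_add_smul).sub
      ((hasDerivAt_id t).const_mul ⟪g a, v⟫)).sub ((hasDerivAt_pow 2 t).const_mul (L / 2 * ‖v‖ ^ 2))
    exact this.congr_deriv (by rw [inner_sub_left]; ring)
  have hanti : AntitoneOn φ (Ici 0) := by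
    refine antitoneOn_of_hasDerivWithinAt_nonpos (convex_Ici 0)
      (fun t _ => (hφ t).continuousAt.continuousWithinAt) (fun t _ => (hφ t).hasDerivWithinAt) ?_
    intro t ht
    rw [interior_Ici] at ht
    calc ⟪g (a + t • v) - g a, v⟫ - L * ‖v‖ ^ 2 * t
        ≤ ‖g (a + t • v) - g a‖ * ‖v‖ - L * ‖v‖ ^ 2 * t := by gcongr; exact real_inner_le_norm _ _
      _ ≤ L * ‖(a + t • v) - a‖ * ‖v‖ - L * ‖v‖ ^ 2 * t := by gcongr; exact hlip _
      _ = 0 := by rw [add_sub_cancel_left, norm_smul, Real.norm_of_nonneg ht.le]; ring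
  have h10 : f b - ⟪g a, v⟫ - L / 2 * ‖v‖ ^ 2 ≤ f a := by
    simpa [φ, v] using hanti self_mem_Ici (mem_Ici.2 zero_le_one) zero_le_one
  linarith

end

theorem stmt_0_general {n : ℕ} (f : EuclideanSpace ℝ (Fin n) → ℝ)
    (g : EuclideanSpace ℝ (Fin n) → EuclideanSpace ℝ (Fin n)) (L : ℝ)
    (hconv : ConvexOn ℝ Set.univ f)
    (hgrad : ∀ x, HasGradientAt f (g x) x)
    (hlip : ∀ x y, ‖g x - g y‖ ≤ L * ‖x - y‖)
    (x y z : EuclideanSpace ℝ (Fin n)) :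
    ⟪g x - g y, z - y⟫ ≥ -(L / 2) * ‖z - x‖ ^ 2 := by
  have hzy := hconv.add_inner_le_of_hasGradientAt (mem_univ y) (mem_univ z) (hgrad y)
  have hyx := hconv.add_inner_le_of_hasGradientAt (mem_univ x) (mem_univ y) (hgrad x)
  have hdescent := le_add_inner_add_sq_of_hasGradientAt hgrad (fun w => hlip w x) z
  have hsplit : ⟪g x, z - x⟫ - ⟪g x, y - x⟫ = ⟪g x, z - y⟫ := by
    rw [← inner_sub_right, sub_sub_sub_cancel_right]
  rw [inner_sub_left]
  linarith

/-- If `f : ℝ^n → ℝ` is convex, differentiable, and its gradient is `L`-Lipschitz, then for any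
points `x, y, z` we have `⟪∇f(x) − ∇f(y), z − y⟫ ≥ −(L/2)‖z − x‖²`. -/
theorem stmt_0 {n : ℕ} (f : EuclideanSpace ℝ (Fin n) → ℝ)
    (g : EuclideanSpace ℝ (Fin n) → EuclideanSpace ℝ (Fin n)) (L : ℝ) (hL : 0 < L)
    (hconv : ConvexOn ℝ Set.univ f)
    (hgrad : ∀ x, HasGradientAt f (g x) x)
    (hlip : ∀ x y, ‖g x - g y‖ ≤ L * ‖x - y‖)
    (x y z : EuclideanSpace ℝ (Fin n)) :
    ⟪g x - g y, z - y⟫ ≥ -(L / 2) * ‖z - x‖ ^ 2 :=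
  stmt_0_general f g L hconv hgrad hlip x y z
end

section
/- Let Ω be the block matrix Ω = [[I, −αAᵀ, 0], [0, αη(I − (ρ/η)W), 0], [0, 0, (α/ρ)W†]] with α, η, ρ > 0, W symmetric PSD with ρλ_max(W) < η, and A arbitrary. If α < 4λ_min(ηI − ρW)/‖A‖², then the symmetrization S = (Ω + Ωᵀ)/2 is positive semidefinite. -/
/-!
The Moore–Penrose inverse `W†` of a PSD matrix commutes with it, so `W† = W†ᵀ W W†` is PSD.
Writing `S = [[I, B], [Bᵀ, D]]` with `B = -(α/2) [Aᵀ 0]` and `D = diag(α(ηI - ρW), (α/ρ) W†)`,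
the Schur complement of the identity block reduces `S ⪰ 0` to
`D - BᵀB = diag(α(ηI - ρW) - (α/2)² AAᵀ, (α/ρ) W†) ⪰ 0`. The first block is PSD because
`ηI - ρW ⪰ λ_min I` and `AAᵀ ⪯ ‖A‖² I`, so it dominates `(α λ_min - (α/2)² ‖A‖²) I ⪰ 0`.
-/

open Matrix
open scoped Matrix.Norms.L2Operator MatrixOrder ComplexOrder

namespace Matrix

variable {l n : Type*}

lemma mul_comm_of_isMoorePenroseInverse [Fintype n] {R : Type*} [CommRing R]
    {W Wd : Matrix n n R} (hW : Wᵀ = W) (h1 : W * Wd * W = W)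
    (h3 : (W * Wd)ᵀ = W * Wd) (h4 : (Wd * W)ᵀ = Wd * W) : W * Wd = Wd * W := by
  have e3 : Wdᵀ * W = W * Wd := by rw [← h3, transpose_mul, hW]
  have e4 : W * Wdᵀ = Wd * W := by rw [← h4, transpose_mul, hW]
  calc W * Wd = Wdᵀ * (W * Wd * W) := by rw [h1, e3]
    _ = (Wdᵀ * W) * (Wd * W) := by simp only [Matrix.mul_assoc]
    _ = (W * Wd) * (W * Wdᵀ) := by rw [e3, e4]
    _ = (W * Wd * W) * Wdᵀ := by simp only [Matrix.mul_assoc]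
    _ = Wd * W := by rw [h1, e4]

lemma PosSemidef.of_isMoorePenroseInverse [Fintype n] {W Wd : Matrix n n ℝ} (hW : W.PosSemidef)
    (h1 : W * Wd * W = W) (h2 : Wd * W * Wd = Wd)
    (h3 : (W * Wd)ᵀ = W * Wd) (h4 : (Wd * W)ᵀ = Wd * W) : Wd.PosSemidef := by
  have hWt : Wᵀ = W := hW.isHermitian
  have e3 : Wdᵀ * W = W * Wd := by rw [← h3, transpose_mul, hWt]
  have hWd : Wdᵀ * W * Wd = Wd := by
    rw [e3, mul_comm_of_isMoorePenroseInverse hWt h1 h3 h4, h2]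
  simpa [hWd] using hW.conjTranspose_mul_mul_same Wd

lemma IsHermitian.posSemidef_sub_iInf_eigenvalues_smul_one [Fintype n] [DecidableEq n]
    {𝕜 : Type*} [RCLike 𝕜] {M : Matrix n n 𝕜} (hM : M.IsHermitian) :
    (M - (⨅ i, hM.eigenvalues i) • 1).PosSemidef := by
  rw [← le_iff, ← Algebra.algebraMap_eq_smul_one, algebraMap_le_iff_le_spectrum hM.isSelfAdjoint,
    hM.spectrum_real_eq_range_eigenvalues]
  rintro _ ⟨i, rfl⟩
  exact ciInf_le (Finite.bddBelow_range _) i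

lemma dotProduct_self_eq_norm_sq [Fintype n] (x : n → ℝ) :
    x ⬝ᵥ x = ‖(EuclideanSpace.equiv n ℝ).symm x‖ ^ 2 := by
  rw [← real_inner_self_eq_norm_sq]
  exact (EuclideanSpace.inner_toLp_toLp x x).symm

lemma posSemidef_norm_sq_smul_one_sub_mul_transpose [Fintype l] [Fintype n] [DecidableEq l]
    [DecidableEq n] (A : Matrix l n ℝ) : (‖A‖ ^ 2 • (1 : Matrix l l ℝ) - A * Aᵀ).PosSemidef := by
  refine .of_dotProduct_mulVec_nonneg
    ((isHermitian_one.smul (.all _)).sub (isHermitian_mul_conjTranspose_self A)) fun x => ?_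
  have hAx : ‖(EuclideanSpace.equiv n ℝ).symm (Aᵀ *ᵥ x)‖ ≤
      ‖A‖ * ‖(EuclideanSpace.equiv l ℝ).symm x‖ := by
    simpa [← conjTranspose_eq_transpose_of_trivial, l2_opNorm_conjTranspose] using
      l2_opNorm_mulVec Aᴴ ((EuclideanSpace.equiv l ℝ).symm x)
  have hquad : star x ⬝ᵥ (‖A‖ ^ 2 • (1 : Matrix l l ℝ) - A * Aᵀ) *ᵥ x =
      ‖A‖ ^ 2 * (x ⬝ᵥ x) - (Aᵀ *ᵥ x) ⬝ᵥ (Aᵀ *ᵥ x) := by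
    simp [sub_mulVec, smul_mulVec, ← mulVec_mulVec, dotProduct_mulVec x A, mulVec_transpose]
  rw [hquad, dotProduct_self_eq_norm_sq, dotProduct_self_eq_norm_sq, ← mul_pow, sub_nonneg]
  exact pow_le_pow_left₀ (norm_nonneg _) hAx 2

lemma posSemidef_smul_sub_smul_mul_transpose [Fintype l] [Fintype n] [DecidableEq l]
    [DecidableEq n] {M : Matrix l l ℝ} (hM : M.IsHermitian) (A : Matrix l n ℝ) {α : ℝ}
    (hα : 0 ≤ α) (hstep : α * ‖A‖ ^ 2 ≤ 4 * ⨅ i, hM.eigenvalues i) :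
    (α • M - (α / 2) ^ 2 • (A * Aᵀ)).PosSemidef := by
  set μ := ⨅ i, hM.eigenvalues i
  have hsplit : α • M - (α / 2) ^ 2 • (A * Aᵀ) = α • (M - μ • 1) +
      (α / 2) ^ 2 • (‖A‖ ^ 2 • 1 - A * Aᵀ) + (α / 4 * (4 * μ - α * ‖A‖ ^ 2)) • 1 := by
    module
  rw [hsplit]
  exact ((hM.posSemidef_sub_iInf_eigenvalues_smul_one.smul hα).add
    ((posSemidef_norm_sq_smul_one_sub_mul_transpose A).smul (by positivity))).add
    (PosSemidef.one.smul (mul_nonneg (by positivity) (sub_nonneg.mpr hstep)))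

lemma half_smul_add_transpose_fromBlocks_one_zero [DecidableEq l] {D : Matrix n n ℝ}
    (hD : Dᵀ = D) (B : Matrix l n ℝ) :
    (1 / 2 : ℝ) • (fromBlocks 1 B 0 D + (fromBlocks 1 B 0 D)ᵀ) =
      fromBlocks 1 ((1 / 2 : ℝ) • B) ((1 / 2 : ℝ) • B)ᵀ D := by
  rw [fromBlocks_transpose, hD, transpose_one, transpose_zero, fromBlocks_add, fromBlocks_smul,
    transpose_smul]
  congr 1 <;> module

lemma posSemidef_fromBlocks_one_iff [Fintype l] [Fintype n] [DecidableEq l] (B : Matrix l n ℝ)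
    (D : Matrix n n ℝ) : (fromBlocks 1 B Bᵀ D).PosSemidef ↔ (D - Bᵀ * B).PosSemidef := by
  let : Invertible (1 : Matrix l l ℝ) := invertibleOne
  simpa [conjTranspose_eq_transpose_of_trivial] using PosDef.fromBlocks₁₁ B D PosDef.one

lemma fromBlocks_sub_transpose_mul_self_smul_fromCols_zero {k : Type*} [Fintype l] [Fintype n]
    [Fintype k] {R : Type*} [CommRing R] (P : Matrix n n R) (Q : Matrix k k R)
    (X : Matrix l n R) (c : R) :
    fromBlocks P 0 0 Q - (c • fromCols X (0 : Matrix l k R))ᵀ * (c • fromCols X 0) =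
      fromBlocks (P - c ^ 2 • (Xᵀ * X)) 0 0 Q := by
  rw [transpose_smul, transpose_fromCols, Matrix.smul_mul, Matrix.mul_smul, smul_smul, ← sq,
    fromRows_mul_fromCols, fromBlocks_smul, sub_eq_add_neg, fromBlocks_neg, fromBlocks_add]
  simp only [transpose_zero, Matrix.mul_zero, Matrix.zero_mul, smul_zero, neg_zero, add_zero,
    ← sub_eq_add_neg]

lemma PosSemidef.fromBlocks_zero [Fintype l] [Fintype n] {R : Type*} [Ring R] [PartialOrder R]
    [StarRing R] [AddLeftMono R] {P : Matrix l l R} {Q : Matrix n n R}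
    (hP : P.PosSemidef) (hQ : Q.PosSemidef) : (fromBlocks P 0 0 Q).PosSemidef := by
  rw [posSemidef_iff_dotProduct_mulVec] at hP hQ ⊢
  refine ⟨hP.1.fromBlocks (by simp) hQ.1, fun x => ?_⟩
  rw [← Sum.elim_comp_inl_inr x]
  simp only [fromBlocks_mulVec, zero_mulVec, add_zero, zero_add, Function.star_sumElim,
    sumElim_dotProduct_sumElim]
  exact add_nonneg (hP.2 _) (hQ.2 _)

end Matrix

theorem stmt_19_general {m p : ℕ} (W Wd : Matrix (Fin m) (Fin m) ℝ) (hW : W.PosSemidef)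
    (h1 : W * Wd * W = W) (h2 : Wd * W * Wd = Wd)
    (h3 : (W * Wd)ᵀ = W * Wd) (h4 : (Wd * W)ᵀ = Wd * W)
    (A : Matrix (Fin m) (Fin p) ℝ) (α ρ η : ℝ)
    (hα : 0 < α) (hρ : 0 < ρ) (hη : 0 < η)
    (hM : (η • (1 : Matrix (Fin m) (Fin m) ℝ) - ρ • W).IsHermitian)
    (hαA : α * ‖LinearMap.toContinuousLinearMap (Matrix.toEuclideanLin A)‖ ^ 2 <
      4 * ⨅ i, hM.eigenvalues i) :
    (((1 : ℝ) / 2) •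
      ((Matrix.fromBlocks (1 : Matrix (Fin p) (Fin p) ℝ)
          (Matrix.fromCols (-(α • Aᵀ)) (0 : Matrix (Fin p) (Fin m) ℝ))
          (0 : Matrix (Fin m ⊕ Fin m) (Fin p) ℝ)
          (Matrix.fromBlocks ((α * η) • ((1 : Matrix (Fin m) (Fin m) ℝ) - (ρ / η) • W)) 0 0
            ((α / ρ) • Wd))) +
        (Matrix.fromBlocks (1 : Matrix (Fin p) (Fin p) ℝ)
          (Matrix.fromCols (-(α • Aᵀ)) (0 : Matrix (Fin p) (Fin m) ℝ))
          (0 : Matrix (Fin m ⊕ Fin m) (Fin p) ℝ)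
          (Matrix.fromBlocks ((α * η) • ((1 : Matrix (Fin m) (Fin m) ℝ) - (ρ / η) • W)) 0 0
            ((α / ρ) • Wd)))ᵀ)).PosSemidef := by
  set M := η • (1 : Matrix (Fin m) (Fin m) ℝ) - ρ • W
  have hWd : Wd.PosSemidef := .of_isMoorePenroseInverse hW h1 h2 h3 h4
  have hαη : (α * η) • ((1 : Matrix (Fin m) (Fin m) ℝ) - (ρ / η) • W) = α • M := by
    simp only [M, smul_sub, smul_smul]
    congr 2
    field_simp
  have hD : (fromBlocks (α • M) 0 0 ((α / ρ) • Wd))ᵀ = fromBlocks (α • M) 0 0 ((α / ρ) • Wd) := by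
    simpa [conjTranspose_eq_transpose_of_trivial] using
      ((hM.smul (.all α)).fromBlocks (by simp) (hWd.isHermitian.smul (.all (α / ρ)))).eq
  have hAAt : (1 / 2 : ℝ) ^ 2 • ((-(α • Aᵀ))ᵀ * -(α • Aᵀ)) = (α / 2) ^ 2 • (A * Aᵀ) := by
    simp only [transpose_neg, transpose_smul, transpose_transpose, Matrix.neg_mul,
      Matrix.mul_neg, Matrix.smul_mul, Matrix.mul_smul]
    module
  rw [hαη, half_smul_add_transpose_fromBlocks_one_zero hD, posSemidef_fromBlocks_one_iff,
    fromBlocks_sub_transpose_mul_self_smul_fromCols_zero, hAAt]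
  exact (posSemidef_smul_sub_smul_mul_transpose hM A hα.le hαA.le).fromBlocks_zero
    (hWd.smul (by positivity))

/-- Positive semidefiniteness of the symmetrization of the weight matrix `Ω` of Theorem 1: with
`α, η, ρ > 0`, `W` symmetric PSD with `ρ λ_max(W) < η`, `W†` the Moore–Penrose pseudoinverse of
`W`, `A` arbitrary, and `Ω = [[I, −αAᵀ, 0], [0, αη(I − (ρ/η)W), 0], [0, 0, (α/ρ)W†]]`, if
`α‖A‖² < 4 λ_min(ηI − ρW)` (`‖A‖` the spectral norm), then `S = (Ω + Ωᵀ)/2` is positive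
semidefinite. -/
theorem stmt_19 {m p : ℕ} (W Wd : Matrix (Fin m) (Fin m) ℝ) (hW : W.PosSemidef)
    (h1 : W * Wd * W = W) (h2 : Wd * W * Wd = Wd)
    (h3 : (W * Wd)ᵀ = W * Wd) (h4 : (Wd * W)ᵀ = Wd * W)
    (A : Matrix (Fin m) (Fin p) ℝ) (α ρ η : ℝ)
    (hα : 0 < α) (hρ : 0 < ρ) (hη : 0 < η)
    (hstep : ρ * (⨆ i, hW.1.eigenvalues i) < η)
    (hM : (η • (1 : Matrix (Fin m) (Fin m) ℝ) - ρ • W).IsHermitian)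
    (hαA : α * ‖LinearMap.toContinuousLinearMap (Matrix.toEuclideanLin A)‖ ^ 2 <
      4 * ⨅ i, hM.eigenvalues i) :
    (((1 : ℝ) / 2) •
      ((Matrix.fromBlocks (1 : Matrix (Fin p) (Fin p) ℝ)
          (Matrix.fromCols (-(α • Aᵀ)) (0 : Matrix (Fin p) (Fin m) ℝ))
          (0 : Matrix (Fin m ⊕ Fin m) (Fin p) ℝ)
          (Matrix.fromBlocks ((α * η) • ((1 : Matrix (Fin m) (Fin m) ℝ) - (ρ / η) • W)) 0 0
            ((α / ρ) • Wd))) +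
        (Matrix.fromBlocks (1 : Matrix (Fin p) (Fin p) ℝ)
          (Matrix.fromCols (-(α • Aᵀ)) (0 : Matrix (Fin p) (Fin m) ℝ))
          (0 : Matrix (Fin m ⊕ Fin m) (Fin p) ℝ)
          (Matrix.fromBlocks ((α * η) • ((1 : Matrix (Fin m) (Fin m) ℝ) - (ρ / η) • W)) 0 0
            ((α / ρ) • Wd)))ᵀ)).PosSemidef :=
  stmt_19_general W Wd hW h1 h2 h3 h4 A α ρ η hα hρ hη hM hαA
end
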